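/- arXiv:1910.07358 — 5 statements merged into one kernel-verified Lean document; each statement's English description precedes it below -/
import Mathlib

section
/- Let 0 < s < 1, h > 0 and n ∈ ℤ with n ≠ 0. Then K^s_h(n) = −R^s_h(n), i.e. (−1)^n Γ(2s+1)/(Γ(1+s+n) Γ(1+s−n) h^{2s}) = − (4^s Γ(1/2+s) s/(√π Γ(1−s))) · Γ(|n|−s)/(h^{2s} Γ(|n|+1+s)). -/
/-- The kernel of the discrete fractional Laplacian on the mesh `ℤ_h`:
`K^s_h(n) = (-1)^n Γ(2s+1)/(Γ(1+s+n) Γ(1+s-n) h^{2s})`. -/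
noncomputable def Ksh (s h : ℝ) (n : ℤ) : ℝ :=
  (-1 : ℝ) ^ n * Real.Gamma (2 * s + 1) /
    (Real.Gamma (1 + s + (n : ℝ)) * Real.Gamma (1 + s - (n : ℝ)) * h ^ (2 * s))

/-- The kernel `R^s_h`, vanishing at `0`. -/
noncomputable def Rsh (s h : ℝ) (m : ℤ) : ℝ :=
  if m = 0 then 0
  else (4 : ℝ) ^ s * Real.Gamma (1 / 2 + s) * s / (Real.sqrt Real.pi * Real.Gamma (1 - s)) *
    (Real.Gamma (((|m| : ℤ) : ℝ) - s) / (h ^ (2 * s) * Real.Gamma (((|m| : ℤ) : ℝ) + 1 + s)))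

/-!
Euler's reflection formula at `z = m - s` gives
`Γ(1 + s - m) = (-1)^(m+1) π / (sin(π s) Γ(m - s))`, which turns `K^s_h(m)` into
`-Γ(2s+1) sin(π s)/π · Γ(m - s) / (h^{2s} Γ(m + 1 + s))`. Legendre's duplication formula
together with the reflection formula at `s` identifies `Γ(2s+1) sin(π s)/π` with the constant
`4^s Γ(1/2 + s) s / (√π Γ(1 - s))` of `R^s_h`. Both kernels are even in `n`.
-/

open Real

theorem Real.Gamma_natCast_sub_mul_Gamma_one_add_sub (m : ℕ) (s : ℝ) :
    Gamma (m - s) * Gamma (1 + s - m) = (-1) ^ (m + 1) * π / sin (π * s) := by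
  rw [show 1 + s - m = 1 - (m - s) by ring, Gamma_mul_Gamma_one_sub,
    show π * (m - s) = m * π - π * s by ring, sin_nat_mul_pi_sub]
  rcases neg_one_pow_eq_or ℝ m with h | h <;> simp [h, pow_succ, neg_div, div_neg]

theorem Real.four_rpow_mul_Gamma_one_half_add_mul_div_eq {s : ℝ} (hs : 0 < s) :
    (4 : ℝ) ^ s * Gamma (1 / 2 + s) * s / (√π * Gamma (1 - s)) =
      Gamma (2 * s + 1) * sin (π * s) / π := by
  have hΓ : Gamma s ≠ 0 := (Gamma_pos_of_pos hs).ne'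
  have h4 : (4 : ℝ) ^ s * 2 ^ (1 - 2 * s) = 2 := by
    rw [show (4 : ℝ) = 2 ^ (2 : ℝ) by norm_num, ← rpow_mul zero_le_two, ← rpow_add two_pos]
    norm_num
  calc (4 : ℝ) ^ s * Gamma (1 / 2 + s) * s / (√π * Gamma (1 - s))
      = 4 ^ s * (Gamma s * Gamma (s + 1 / 2)) * s / (√π * (Gamma s * Gamma (1 - s))) := by
        rw [add_comm (1 / 2)]; field_simp
    _ = 2 * s * Gamma (2 * s) * sin (π * s) / π := by
        rw [Gamma_mul_Gamma_add_half, Gamma_mul_Gamma_one_sub]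
        field_simp
        rw [h4]
    _ = Gamma (2 * s + 1) * sin (π * s) / π := by
        rw [Gamma_add_one (by positivity)]

theorem Ksh_neg (s h : ℝ) (n : ℤ) : Ksh s h (-n) = Ksh s h n := by
  rw [Ksh, Ksh, zpow_neg, ← inv_zpow, inv_neg_one, Int.cast_neg, sub_neg_eq_add,
    ← sub_eq_add_neg, mul_comm (Gamma (1 + s - n))]

theorem Ksh_abs (s h : ℝ) (n : ℤ) : Ksh s h |n| = Ksh s h n := by
  rcases abs_choice n with hn | hn <;> rw [hn]
  exact Ksh_neg s h n

theorem Rsh_abs (s h : ℝ) (n : ℤ) : Rsh s h |n| = Rsh s h n := by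
  simp only [Rsh, abs_abs, abs_eq_zero]

theorem Ksh_natCast_eq_neg_Rsh {s : ℝ} (hs0 : 0 < s) (hs1 : s < 1) (h : ℝ) {m : ℕ}
    (hm : m ≠ 0) : Ksh s h m = -Rsh s h m := by
  have hsin : sin (π * s) ≠ 0 :=
    (sin_pos_of_pos_of_lt_pi (by positivity) (by nlinarith [pi_pos])).ne'
  have hΓ : Gamma (m - s) ≠ 0 := by
    have : (1 : ℝ) ≤ m := by exact_mod_cast Nat.one_le_iff_ne_zero.mpr hm
    exact (Gamma_pos_of_pos (by linarith)).ne'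
  have hrefl : Gamma (1 + s - m) = (-1) ^ (m + 1) * π / sin (π * s) / Gamma (m - s) := by
    rw [← Gamma_natCast_sub_mul_Gamma_one_add_sub, mul_div_cancel_left₀ _ hΓ]
  rw [Ksh, Rsh, if_neg (by exact_mod_cast hm), four_rpow_mul_Gamma_one_half_add_mul_div_eq hs0,
    Nat.abs_cast, zpow_natCast, Int.cast_natCast, hrefl,
    show (m : ℝ) + 1 + s = 1 + s + m by ring]
  field_simp
  ring

theorem Ksh_eq_neg_Rsh_general (s : ℝ) (hs0 : 0 < s) (hs1 : s < 1) (h : ℝ)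
    (n : ℤ) (hn : n ≠ 0) :
    Ksh s h n = -Rsh s h n ∧
    (-1 : ℝ) ^ n * Real.Gamma (2 * s + 1) /
        (Real.Gamma (1 + s + (n : ℝ)) * Real.Gamma (1 + s - (n : ℝ)) * h ^ (2 * s)) =
      -((4 : ℝ) ^ s * Real.Gamma (1 / 2 + s) * s / (Real.sqrt Real.pi * Real.Gamma (1 - s)) *
        (Real.Gamma (((|n| : ℤ) : ℝ) - s) /
          (h ^ (2 * s) * Real.Gamma (((|n| : ℤ) : ℝ) + 1 + s)))) := by
  have hK : Ksh s h n = -Rsh s h n := by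
    rw [← Ksh_abs, ← Rsh_abs, ← Int.natCast_natAbs]
    exact Ksh_natCast_eq_neg_Rsh hs0 hs1 h (Int.natAbs_ne_zero.mpr hn)
  refine ⟨hK, ?_⟩
  rwa [Ksh, Rsh, if_neg hn] at hK

/-- For `n ≠ 0`, `K^s_h(n) = -R^s_h(n)`. -/
theorem Ksh_eq_neg_Rsh (s : ℝ) (hs0 : 0 < s) (hs1 : s < 1) (h : ℝ) (hh : 0 < h)
    (n : ℤ) (hn : n ≠ 0) :
    Ksh s h n = -Rsh s h n ∧
    (-1 : ℝ) ^ n * Real.Gamma (2 * s + 1) /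
        (Real.Gamma (1 + s + (n : ℝ)) * Real.Gamma (1 + s - (n : ℝ)) * h ^ (2 * s)) =
      -((4 : ℝ) ^ s * Real.Gamma (1 / 2 + s) * s / (Real.sqrt Real.pi * Real.Gamma (1 - s)) *
        (Real.Gamma (((|n| : ℤ) : ℝ) - s) /
          (h ^ (2 * s) * Real.Gamma (((|n| : ℤ) : ℝ) + 1 + s)))) :=
  Ksh_eq_neg_Rsh_general s hs0 hs1 h n hn
end

section
/- Let 0 < s < 1. Then the series Σ_{n∈ℤ} (−1)^n Γ(2s+1)/(Γ(1+s+n) Γ(1+s−n)) converges absolutely and its sum equals 0. Equivalently, Σ_{n∈ℤ} K^s_h(n) = 0 for every h > 0; in particular the discrete fractional Laplacian annihilates constant functions. -/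
open Real Filter Topology Finset

noncomputable section

def gammaRatio (a b : ℝ) (n : ℕ) : ℝ := Gamma (n + a) / Gamma (n + b)

section GammaRatio

variable {a b : ℝ}

lemma gammaRatio_pos (ha : 0 < a) (hb : 0 < b) (n : ℕ) : 0 < gammaRatio a b n :=
  div_pos (Gamma_pos_of_pos (by positivity)) (Gamma_pos_of_pos (by positivity))

lemma gammaRatio_add_one_right (hb : 0 < b) (n : ℕ) :
    gammaRatio a (b + 1) n = gammaRatio a b n / (n + b) := by
  rw [gammaRatio, gammaRatio, ← add_assoc, Gamma_add_one (by positivity), div_div, mul_comm]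

lemma gammaRatio_sub_gammaRatio_succ (ha : 0 < a) (hb : 0 < b) (n : ℕ) :
    gammaRatio a b n - gammaRatio a b (n + 1) = (b - a) * gammaRatio a (b + 1) n := by
  have hGb : Gamma (n + b) ≠ 0 := (Gamma_pos_of_pos (by positivity)).ne'
  rw [gammaRatio_add_one_right hb, gammaRatio, gammaRatio, Nat.cast_succ, add_right_comm,
    Gamma_add_one (by positivity), add_right_comm (n : ℝ) 1 b, Gamma_add_one (by positivity)]
  field_simp
  ring

lemma sum_range_gammaRatio_add_one (ha : 0 < a) (hb : 0 < b) (hab : a < b) (N : ℕ) :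
    ∑ n ∈ range N, gammaRatio a (b + 1) n =
      (gammaRatio a b 0 - gammaRatio a b N) / (b - a) := by
  rw [eq_div_iff (sub_ne_zero.2 hab.ne'), sum_mul, ← sum_range_sub']
  exact sum_congr rfl fun n _ => by rw [gammaRatio_sub_gammaRatio_succ ha hb, mul_comm]

lemma summable_gammaRatio_add_one (ha : 0 < a) (hb : 0 < b) (hab : a < b) :
    Summable (gammaRatio a (b + 1)) := by
  refine summable_of_sum_range_le (c := gammaRatio a b 0 / (b - a))
    (fun n => (gammaRatio_pos ha (by positivity) n).le) fun N => ?_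
  rw [sum_range_gammaRatio_add_one ha hb hab]
  exact div_le_div_of_nonneg_right (by linarith [gammaRatio_pos ha hb N]) (by linarith)

lemma tendsto_gammaRatio_atTop (ha : 0 < a) (hb : 0 < b) (hab : a < b) :
    Tendsto (gammaRatio a b) atTop (𝓝 0) := by
  have hanti : Antitone (gammaRatio a b) := antitone_nat_of_succ_le fun n => sub_nonneg.1 <| by
    rw [gammaRatio_sub_gammaRatio_succ ha hb]
    exact mul_nonneg (sub_pos.2 hab).le (gammaRatio_pos ha (by positivity) n).le
  have hbdd : BddBelow (Set.range (gammaRatio a b)) :=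
    ⟨0, by rintro _ ⟨n, rfl⟩; exact (gammaRatio_pos ha hb n).le⟩
  have hlim := tendsto_atTop_ciInf hanti hbdd
  set L := ⨅ n, gammaRatio a b n
  have hL0 : 0 ≤ L := le_ciInf fun n => (gammaRatio_pos ha hb n).le
  obtain hL | hL := hL0.eq_or_lt
  · rwa [← hL] at hlim
  have harmonic : Summable fun n : ℕ => 1 / |(n : ℝ) + b| ^ (1 : ℝ) := by
    refine ((summable_gammaRatio_add_one ha hb hab).div_const L).of_nonneg_of_le
      (fun n => by positivity) fun n => ?_
    rw [abs_of_pos (by positivity), rpow_one, gammaRatio_add_one_right hb]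
    calc 1 / ((n : ℝ) + b) = L / (n + b) / L := by field_simp [hL.ne']
      _ ≤ gammaRatio a b n / (n + b) / L := by gcongr; exact ciInf_le hbdd n
  exact absurd ((summable_one_div_nat_add_rpow b 1).1 harmonic) (lt_irrefl 1)

lemma hasSum_gammaRatio_add_one (ha : 0 < a) (hb : 0 < b) (hab : a < b) :
    HasSum (gammaRatio a (b + 1)) (gammaRatio a b 0 / (b - a)) := by
  rw [hasSum_iff_tendsto_nat_of_nonneg (fun n => (gammaRatio_pos ha (by positivity) n).le)]
  simp only [sum_range_gammaRatio_add_one ha hb hab]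
  simpa using ((tendsto_gammaRatio_atTop ha hb hab).const_sub (gammaRatio a b 0)).div_const (b - a)

end GammaRatio

lemma inv_Gamma_sub_natCast {s : ℝ} (hs : sin (π * s) ≠ 0) (n : ℕ) :
    (Gamma (s - n))⁻¹ = (-1) ^ n * sin (π * s) / π * Gamma (n + (1 - s)) := by
  have h := Gamma_mul_Gamma_one_sub (s - n)
  rw [mul_sub, mul_comm π n, sin_sub_nat_mul_pi, sub_sub_eq_add_sub,
    show 1 + (n : ℝ) - s = n + (1 - s) by ring] at h
  have hsn : (-1) ^ n * sin (π * s) ≠ 0 := mul_ne_zero (pow_ne_zero _ (by norm_num)) hs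
  refine inv_eq_of_mul_eq_one_right ?_
  calc Gamma (s - n) * ((-1) ^ n * sin (π * s) / π * Gamma (n + (1 - s)))
      = Gamma (s - n) * Gamma (n + (1 - s)) * ((-1) ^ n * sin (π * s)) / π := by ring
    _ = 1 := by rw [h]; field_simp

def kernelCoeff (s : ℝ) (n : ℤ) : ℝ :=
  (-1 : ℝ) ^ n * Gamma (2 * s + 1) / (Gamma (1 + s + n) * Gamma (1 + s - n))

lemma Ksh_eq_kernelCoeff_div (s h : ℝ) (n : ℤ) : Ksh s h n = kernelCoeff s n / h ^ (2 * s) := by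
  rw [Ksh, kernelCoeff, div_div]

lemma kernelCoeff_neg (s : ℝ) (n : ℤ) : kernelCoeff s (-n) = kernelCoeff s n := by
  rw [kernelCoeff, kernelCoeff, zpow_neg, ← inv_zpow, inv_neg, inv_one, Int.cast_neg,
    sub_neg_eq_add, ← sub_eq_add_neg, mul_comm (Gamma (1 + s - n))]

lemma kernelCoeff_natCast_add_one {s : ℝ} (hs : sin (π * s) ≠ 0) (n : ℕ) :
    kernelCoeff s (n + 1) =
      -(Gamma (2 * s + 1) * sin (π * s) / π) * gammaRatio (1 - s) (1 + s + 1) n := by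
  have hsq : ((-1 : ℝ) ^ n) ^ 2 = 1 := by rw [← pow_mul, pow_mul', neg_one_sq, one_pow]
  rw [kernelCoeff, gammaRatio, zpow_add_one₀ (by norm_num), zpow_natCast, Int.cast_add,
    Int.cast_natCast, Int.cast_one, show 1 + s + (n + 1) = n + (1 + s + 1) by ring,
    show 1 + s - (n + 1) = s - n by ring, div_mul_eq_div_div, div_eq_mul_inv _ (Gamma (s - n)),
    inv_Gamma_sub_natCast hs]
  linear_combination -(Gamma (2 * s + 1) * sin (π * s) / π * Gamma (n + (1 - s)) /
    Gamma (n + (1 + s + 1))) * hsq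

lemma sin_pi_mul_pos {s : ℝ} (hs0 : 0 < s) (hs1 : s < 1) : 0 < sin (π * s) :=
  sin_pos_of_pos_of_lt_pi (by positivity) (by nlinarith [pi_pos])

lemma hasSum_kernelCoeff {s : ℝ} (hs0 : 0 < s) (hs1 : s < 1) : HasSum (kernelCoeff s) 0 := by
  have hsin := sin_pi_mul_pos hs0 hs1
  set c := Gamma (2 * s + 1) * sin (π * s) / π
  set T := -c * (gammaRatio (1 - s) (1 + s) 0 / (1 + s - (1 - s)))
  have htail : HasSum (fun n : ℕ => kernelCoeff s (n + 1)) T := by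
    simpa only [kernelCoeff_natCast_add_one hsin.ne'] using
      (hasSum_gammaRatio_add_one (by linarith) (by linarith) (by linarith)).mul_left (-c)
  have hneg : HasSum (fun n : ℕ => kernelCoeff s (-(n + 1))) T := by
    simpa only [kernelCoeff_neg] using htail
  convert htail.of_add_one_of_neg_add_one hneg using 1
  have hs : s ≠ 0 := hs0.ne'
  have hGs : Gamma s ≠ 0 := (Gamma_pos_of_pos hs0).ne'
  have hrefl : Gamma s * Gamma (1 - s) * sin (π * s) = π := by
    rw [Gamma_mul_Gamma_one_sub, div_mul_cancel₀ _ hsin.ne']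
  simp only [T, c, kernelCoeff, gammaRatio, Nat.cast_zero, Int.cast_zero, zero_add, add_zero,
    sub_zero, zpow_zero]
  rw [add_comm 1 s, Gamma_add_one hs, show s + 1 - (1 - s) = 2 * s by ring]
  field_simp
  rw [mul_comm s π]
  linear_combination 2 * Gamma (2 * s + 1) * hrefl

end

/-- The series `Σ_{n∈ℤ} (-1)^n Γ(2s+1)/(Γ(1+s+n)Γ(1+s-n))` converges absolutely with sum `0`;
equivalently `Σ_{n∈ℤ} K^s_h(n) = 0` for every `h > 0`. -/
theorem kernel_sum_zero (s : ℝ) (hs0 : 0 < s) (hs1 : s < 1) :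
    (Summable fun n : ℤ =>
      |(-1 : ℝ) ^ n * Real.Gamma (2 * s + 1) /
        (Real.Gamma (1 + s + (n : ℝ)) * Real.Gamma (1 + s - (n : ℝ)))|) ∧
    (∑' n : ℤ, (-1 : ℝ) ^ n * Real.Gamma (2 * s + 1) /
        (Real.Gamma (1 + s + (n : ℝ)) * Real.Gamma (1 + s - (n : ℝ)))) = 0 ∧
    ∀ h : ℝ, 0 < h → (∑' n : ℤ, Ksh s h n) = 0 := by
  have hsum : HasSum (kernelCoeff s) 0 := hasSum_kernelCoeff hs0 hs1
  refine ⟨hsum.summable.abs, hsum.tsum_eq, fun h _ => ?_⟩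
  simp only [Ksh_eq_kernelCoeff_div, tsum_div_const, hsum.tsum_eq, zero_div]
end

section
/- Let 0 < s < 1 and n ∈ ℤ. Then (1/(2π)) ∫_{−π}^{π} (4 sin²(θ/2))^s cos(nθ) dθ = (−1)^n Γ(2s+1)/(Γ(1+s+n) Γ(1+s−n)); that is, the Fourier coefficients of the symbol θ ↦ (4 sin²(θ/2))^s on [−π,π] are exactly the kernel values K^s_1(n) of the discrete fractional Laplacian with mesh size h = 1. -/
/-!
The symbol is even, so the coefficient is `(1/π) ∫₀^π`. The substitution `t = cos²(θ/2)`
turns the zeroth coefficient into `4^s B(1/2, s + 1/2)`, which Legendre's duplication formula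
rewrites as `Γ(2s+1)/Γ(s+1)²`. Differentiating `symbol(θ) sin(θ/2) cos((n + 1/2)θ)`, which
vanishes at `0` and `π`, gives the recurrence `(s - n) cₙ + (s + n + 1) cₙ₊₁ = 0` for the
coefficients; by `Γ(z + 1) = z Γ(z)` the kernel satisfies the same recurrence.
-/

open Real Set MeasureTheory

theorem Real.integral_rpow_mul_one_sub_rpow {a b : ℝ} (ha : 0 < a) (hb : 0 < b) :
    ∫ t in (0 : ℝ)..1, t ^ (a - 1) * (1 - t) ^ (b - 1) = Gamma a * Gamma b / Gamma (a + b) := by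
  have hβ := Complex.betaIntegral_eq_Gamma_mul_div a b (by simpa) (by simpa)
  rw [Complex.betaIntegral] at hβ
  rw [← Complex.ofReal_inj, ← intervalIntegral.integral_ofReal]
  push_cast [← Complex.Gamma_ofReal]
  rw [← hβ]
  refine intervalIntegral.integral_congr fun t ht => ?_
  rw [uIcc_of_le zero_le_one] at ht
  push_cast [Complex.ofReal_cpow ht.1, Complex.ofReal_cpow (sub_nonneg.2 ht.2)]
  rfl

theorem Real.four_rpow_mul_Gamma_add_half_mul_Gamma_add_one (s : ℝ) :
    4 ^ s * Gamma (s + 1 / 2) * Gamma (s + 1) = √π * Gamma (2 * s + 1) := by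
  have h := Real.Gamma_mul_Gamma_add_half (s + 1 / 2)
  rw [show s + 1 / 2 + 1 / 2 = s + 1 by ring, show 2 * (s + 1 / 2) = 2 * s + 1 by ring] at h
  have h4 : (4 : ℝ) ^ s * 2 ^ (1 - (2 * s + 1)) = 1 := by
    rw [show (4 : ℝ) = 2 ^ (2 : ℝ) by norm_num, ← rpow_mul zero_le_two, ← rpow_add two_pos]
    ring_nf
    exact rpow_zero 2
  rw [mul_assoc, h]
  linear_combination Gamma (2 * s + 1) * √π * h4

theorem intervalIntegral.integral_symm_eq_two_smul_of_even {E : Type*} [NormedAddCommGroup E]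
    [NormedSpace ℝ E] {f : ℝ → E} (hf : ∀ x, f (-x) = f x) {a : ℝ}
    (hfi : IntervalIntegrable f volume (-a) a) :
    ∫ x in -a..a, f x = (2 : ℝ) • ∫ x in 0..a, f x := by
  have h0 : (0 : ℝ) ∈ uIcc (-a) a := by
    rcases le_total 0 a with h | h <;> simp [h]
  have hneg : ∫ x in -a..0, f x = ∫ x in 0..a, f x := by
    simpa [hf] using (integral_comp_neg (a := 0) (b := a) f).symm
  rw [← integral_add_adjacent_intervals (hfi.mono_set (uIcc_subset_uIcc left_mem_uIcc h0))
    (hfi.mono_set (uIcc_subset_uIcc h0 right_mem_uIcc)), hneg, two_smul]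

namespace DiscreteFractionalLaplacian

noncomputable def symbol (s θ : ℝ) : ℝ := (4 * sin (θ / 2) ^ 2) ^ s

noncomputable def kernel (s : ℝ) (n : ℤ) : ℝ :=
  (-1) ^ n * Gamma (2 * s + 1) / (Gamma (1 + s + n) * Gamma (1 + s - n))

theorem continuous_symbol {s : ℝ} (hs : 0 ≤ s) : Continuous (symbol s) :=
  continuous_iff_continuousAt.2 fun _ => ContinuousAt.rpow_const (by fun_prop) (Or.inr hs)

theorem symbol_neg (s θ : ℝ) : symbol s (-θ) = symbol s θ := by
  simp [symbol, neg_div]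

theorem hasDerivAt_symbol (s : ℝ) {θ : ℝ} (hθ : sin (θ / 2) ≠ 0) :
    HasDerivAt (symbol s) (s * symbol s θ * (cos (θ / 2) / sin (θ / 2))) θ := by
  have hbase :
      HasDerivAt (fun θ => 4 * sin (θ / 2) ^ 2) (4 * sin (θ / 2) * cos (θ / 2)) θ := by
    refine ((((hasDerivAt_id θ).div_const 2).sin.fun_pow 2).const_mul 4).congr_deriv ?_
    simp only [id]
    ring
  refine ((hasDerivAt_rpow_const (p := s) (Or.inl (by positivity))).comp θ hbase).congr_deriv ?_
  rw [rpow_sub_one (by positivity), symbol]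
  field_simp

theorem hasDerivAt_symbol_mul_sin_mul_cos (s ν : ℝ) {θ : ℝ} (hθ : sin (θ / 2) ≠ 0) :
    HasDerivAt (fun θ => symbol s θ * sin (θ / 2) * cos ((ν + 1 / 2) * θ))
      (symbol s θ / 2 * ((s - ν) * cos (ν * θ) + (s + ν + 1) * cos ((ν + 1) * θ))) θ := by
  have hsin : HasDerivAt (fun θ => sin (θ / 2)) (cos (θ / 2) * (1 / 2)) θ :=
    ((hasDerivAt_id θ).div_const 2).sin
  have hcos : HasDerivAt (fun θ => cos ((ν + 1 / 2) * θ))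
      (-sin ((ν + 1 / 2) * θ) * (ν + 1 / 2)) θ := by
    simpa using ((hasDerivAt_id θ).const_mul (ν + 1 / 2)).cos
  refine (((hasDerivAt_symbol s hθ).fun_mul hsin).fun_mul hcos).congr_deriv ?_
  rw [show ν * θ = (ν + 1 / 2) * θ - θ / 2 by ring,
    show (ν + 1) * θ = (ν + 1 / 2) * θ + θ / 2 by ring, cos_sub, cos_add]
  field_simp
  ring

theorem integral_symbol_eq_four_rpow_mul_integral (s : ℝ) :
    ∫ θ in 0..π, symbol s θ =
      4 ^ s * ∫ t in (0 : ℝ)..1, t ^ (1 / 2 - 1 : ℝ) * (1 - t) ^ (s + 1 / 2 - 1) := by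
  -- `t = cos²(θ/2)`, written as `(1 + cos θ) / 2` so that `Real.bijOn_cos` gives injectivity
  -- and the image
  set f : ℝ → ℝ := fun θ => (1 + cos θ) / 2
  have hf' : ∀ θ ∈ Icc 0 π, HasDerivWithinAt f (-sin θ / 2) (Icc 0 π) θ := fun θ _ =>
    (((hasDerivAt_cos θ).const_add 1).div_const 2).hasDerivWithinAt
  have hinj : InjOn f (Icc 0 π) := fun x hx y hy hxy =>
    injOn_cos hx hy (by simpa [f] using hxy)
  have himage : f '' Icc 0 π = Icc 0 1 := by
    have : f = (fun c => 1 / 2 * c + 1 / 2) ∘ cos := by ext; simp [f]; ring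
    rw [this, image_comp, bijOn_cos.image_eq, image_affine_Icc' one_half_pos]
    norm_num
  have hsubst := integral_image_eq_integral_abs_deriv_smul measurableSet_Icc hf' hinj
    (fun t => t ^ (1 / 2 - 1 : ℝ) * (1 - t) ^ (s + 1 / 2 - 1))
  rw [himage, integral_Icc_eq_integral_Ioo, integral_Icc_eq_integral_Ioo] at hsubst
  rw [intervalIntegral.integral_of_le pi_pos.le, intervalIntegral.integral_of_le zero_le_one,
    integral_Ioc_eq_integral_Ioo, integral_Ioc_eq_integral_Ioo, hsubst, ← integral_const_mul]
  refine setIntegral_congr_fun measurableSet_Ioo fun θ hθ => ?_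
  have hsin : 0 < sin θ := sin_pos_of_pos_of_lt_pi hθ.1 hθ.2
  have hx : 0 < f θ := by simp only [f]; nlinarith [cos_sq_add_sin_sq θ, neg_one_le_cos θ]
  have hy : 0 < 1 - f θ := by simp only [f]; nlinarith [cos_sq_add_sin_sq θ, cos_le_one θ]
  have hbase : 4 * sin (θ / 2) ^ 2 = 4 * (1 - f θ) := by
    rw [sin_sq_eq_half_sub, mul_div_cancel₀ _ two_ne_zero]; simp only [f]; ring
  have habs : |-sin θ / 2| = f θ ^ (1 / 2 : ℝ) * (1 - f θ) ^ (1 / 2 : ℝ) := by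
    rw [neg_div, abs_neg, abs_of_pos (half_pos hsin), ← mul_rpow hx.le hy.le, ← sqrt_eq_rpow,
      eq_comm, sqrt_eq_iff_mul_self_eq_of_pos (half_pos hsin)]
    simp only [f]
    nlinarith [cos_sq_add_sin_sq θ]
  rw [symbol, hbase, mul_rpow zero_le_four hy.le, smul_eq_mul, habs, mul_mul_mul_comm,
    ← rpow_add hx, ← rpow_add hy, show (1 / 2 : ℝ) + (1 / 2 - 1) = 0 by norm_num,
    show (1 / 2 : ℝ) + (s + 1 / 2 - 1) = s by ring, rpow_zero, one_mul]

theorem integral_symbol {s : ℝ} (hs : -1 / 2 < s) :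
    ∫ θ in 0..π, symbol s θ = π * kernel s 0 := by
  have hΓ : Gamma (s + 1) ≠ 0 := (Gamma_pos_of_pos (by linarith)).ne'
  rw [integral_symbol_eq_four_rpow_mul_integral, integral_rpow_mul_one_sub_rpow one_half_pos
    (by linarith), Gamma_one_half_eq, show 1 / 2 + (s + 1 / 2) = s + 1 by ring, kernel]
  have hdup := four_rpow_mul_Gamma_add_half_mul_Gamma_add_one s
  simp only [zpow_zero, Int.cast_zero, add_zero, sub_zero, add_comm 1 s, one_mul]
  calc 4 ^ s * (√π * Gamma (s + 1 / 2) / Gamma (s + 1))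
      = √π * (4 ^ s * Gamma (s + 1 / 2) * Gamma (s + 1)) / (Gamma (s + 1) * Gamma (s + 1)) := by
        field_simp
    _ = π * (Gamma (2 * s + 1) / (Gamma (s + 1) * Gamma (s + 1))) := by
        rw [hdup, ← mul_assoc, mul_self_sqrt pi_pos.le, mul_div_assoc]

theorem integral_symbol_mul_cos_recurrence {s : ℝ} (hs : 0 ≤ s) (n : ℤ) :
    (s - n) * (∫ θ in 0..π, symbol s θ * cos (n * θ)) +
      (s + n + 1) * ∫ θ in 0..π, symbol s θ * cos ((n + 1) * θ) = 0 := by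
  have hcont := continuous_symbol hs
  have hderiv : ∀ θ ∈ Ioo 0 π,
      HasDerivAt (fun θ => symbol s θ * sin (θ / 2) * cos ((n + 1 / 2) * θ))
      (symbol s θ / 2 * ((s - n) * cos (n * θ) + (s + n + 1) * cos ((n + 1) * θ))) θ :=
    fun θ hθ => hasDerivAt_symbol_mul_sin_mul_cos s n
      (sin_pos_of_pos_of_lt_pi (half_pos hθ.1) (by linarith [hθ.2, pi_pos])).ne'
  have hftc := intervalIntegral.integral_eq_sub_of_hasDerivAt_of_le pi_pos.le (by fun_prop) hderiv
    ((by fun_prop : Continuous _).intervalIntegrable _ _)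
  have hend : cos ((n + 1 / 2) * π) = 0 := by
    rw [add_mul, one_div_mul_eq_div, cos_add_pi_div_two, sin_int_mul_pi, neg_zero]
  have hsplit : ∫ θ in 0..π,
        symbol s θ / 2 * ((s - n) * cos (n * θ) + (s + n + 1) * cos ((n + 1) * θ)) =
      ((s - n) * (∫ θ in 0..π, symbol s θ * cos (n * θ)) +
        (s + n + 1) * ∫ θ in 0..π, symbol s θ * cos ((n + 1) * θ)) / 2 := by
    rw [← intervalIntegral.integral_const_mul, ← intervalIntegral.integral_const_mul,
      ← intervalIntegral.integral_add, ← intervalIntegral.integral_div]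
    · exact intervalIntegral.integral_congr fun θ _ => by ring
    all_goals exact (by fun_prop : Continuous _).intervalIntegrable _ _
  simp only [hend, hsplit, mul_zero, zero_div, sin_zero] at hftc
  linarith

theorem kernel_neg (s : ℝ) (n : ℤ) : kernel s (-n) = kernel s n := by
  simp only [kernel, zpow_neg, ← inv_zpow, inv_neg, inv_one, Int.cast_neg, sub_neg_eq_add,
    ← sub_eq_add_neg, mul_comm (Gamma (1 + s + n))]

/-- Needs no side conditions: in the degenerate cases `1 + s + n = 0` and `s = n` both sides
vanish, because `Real.Gamma` is `0` at nonpositive integers. -/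
theorem kernel_add_one (s : ℝ) (n : ℤ) :
    (1 + s + n) * kernel s (n + 1) = (n - s) * kernel s n := by
  rcases eq_or_ne (1 + s + n) 0 with h | h
  · simp [kernel, h]
  rcases eq_or_ne (s - n) 0 with h' | h'
  · simp [kernel, show (n : ℝ) - s = 0 by linarith, show 1 + s - (n + 1) = s - n by ring, h']
  have hA : Gamma (1 + s + (n + 1)) = (1 + s + n) * Gamma (1 + s + n) := by
    rw [← Gamma_add_one h]; ring_nf
  have hB : Gamma (1 + s - n) = (s - n) * Gamma (1 + s - (n + 1)) := by
    rw [show 1 + s - (n + 1) = s - n by ring, ← Gamma_add_one h']; ring_nf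
  simp only [kernel, Int.cast_add, Int.cast_one, zpow_add_one₀ (by norm_num : (-1 : ℝ) ≠ 0),
    hA, hB, div_eq_mul_inv, mul_inv]
  linear_combination (-1) ^ n * Gamma (2 * s + 1) * (Gamma (1 + s + n))⁻¹ *
    (Gamma (1 + s - (n + 1)))⁻¹ * (mul_inv_cancel₀ h' - mul_inv_cancel₀ h)

theorem integral_symbol_mul_cos_natCast {s : ℝ} (hs : 0 ≤ s) (m : ℕ) :
    ∫ θ in 0..π, symbol s θ * cos (m * θ) = π * kernel s m := by
  induction m with
  | zero => simpa using integral_symbol (s := s) (by linarith)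
  | succ m ih =>
    have hrec := integral_symbol_mul_cos_recurrence hs m
    have hker := kernel_add_one s m
    push_cast at hrec hker ⊢
    rw [ih] at hrec
    have hpos : 0 < s + m + 1 := by positivity
    apply mul_left_cancel₀ hpos.ne'
    linear_combination hrec - π * hker

theorem integral_symbol_mul_cos_intCast {s : ℝ} (hs : 0 ≤ s) (n : ℤ) :
    ∫ θ in -π..π, symbol s θ * cos (n * θ) = 2 * π * kernel s n := by
  suffices h : ∀ m : ℕ, ∫ θ in -π..π, symbol s θ * cos (m * θ) = 2 * π * kernel s m by
    obtain ⟨m, rfl | rfl⟩ := n.eq_nat_or_neg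
    · exact_mod_cast h m
    · simpa [kernel_neg] using h m
  intro m
  rw [intervalIntegral.integral_symm_eq_two_smul_of_even, integral_symbol_mul_cos_natCast hs,
    smul_eq_mul, mul_assoc]
  · exact fun θ => by rw [symbol_neg, mul_neg, cos_neg]
  · exact ((continuous_symbol hs).mul (by fun_prop)).intervalIntegrable _ _

end DiscreteFractionalLaplacian

open DiscreteFractionalLaplacian

theorem fourier_coeff_discrete_kernel_general (s : ℝ) (hs0 : 0 < s) (n : ℤ) :
    (1 / (2 * Real.pi)) *
        ∫ θ in (-Real.pi)..Real.pi, (4 * Real.sin (θ / 2) ^ 2) ^ s * Real.cos (n * θ) =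
      (-1 : ℝ) ^ n * Real.Gamma (2 * s + 1) /
        (Real.Gamma (1 + s + (n : ℝ)) * Real.Gamma (1 + s - (n : ℝ))) := by
  change 1 / (2 * π) * ∫ θ in -π..π, symbol s θ * cos (n * θ) = kernel s n
  rw [integral_symbol_mul_cos_intCast hs0.le]
  field_simp

/-- The Fourier coefficients of the symbol `θ ↦ (4 sin²(θ/2))^s` on `[-π, π]` are the kernel
values `K^s_1(n)` of the discrete fractional Laplacian with mesh size `h = 1`. -/
theorem fourier_coeff_discrete_kernel (s : ℝ) (hs0 : 0 < s) (hs1 : s < 1) (n : ℤ) :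
    (1 / (2 * Real.pi)) *
        ∫ θ in (-Real.pi)..Real.pi, (4 * Real.sin (θ / 2) ^ 2) ^ s * Real.cos (n * θ) =
      (-1 : ℝ) ^ n * Real.Gamma (2 * s + 1) /
        (Real.Gamma (1 + s + (n : ℝ)) * Real.Gamma (1 + s - (n : ℝ))) :=
  fourier_coeff_discrete_kernel_general s hs0 n
end

section
/- Let 0 < α < 1, z ∈ ℝ and t > 0. Set u(τ) := E_{α,1}(z τ^α) for τ ≥ 0, where E_{α,1} is the Mittag-Leffler function. Then the function t ↦ ∫_0^t ((t−τ)^{−α}/Γ(1−α)) (u(τ) − u(0)) dτ is differentiable at t, and its derivative equals z E_{α,1}(z t^α); that is, the Caputo fractional derivative satisfies D_t^α E_{α,1}(z t^α) = z E_{α,1}(z t^α). -/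
/-- The Mittag-Leffler function `E_{α,1}(z) = Σ_{n=0}^∞ z^n/Γ(αn+1)`. -/
noncomputable def mittagLeffler (α z : ℝ) : ℝ :=
  ∑' n : ℕ, z ^ n / Real.Gamma (α * n + 1)

/-!
Expanding `E_α(zτ^α) - 1 = Σ_{n ≥ 0} z^{n+1} τ^{α(n+1)} / Γ(α(n+1)+1)`, the Riemann–Liouville
integral of order `1 - α` maps each power `τ^γ / Γ(γ+1)` to `r^{γ+1-α} / Γ(γ+2-α)` (a Beta
integral), so the Caputo integral equals `Σ z^{n+1} r^{αn+1} / Γ(αn+2)`. Differentiating this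
series term by term gives `Σ z^{n+1} t^{αn} / Γ(αn+1) = z E_α(z t^α)`. Both interchanges are
justified by the superexponential growth of `Γ(αn+β)`.
-/

open Real Filter Set Topology MeasureTheory
open scoped Nat

theorem eventually_pow_succ_le_factorial (B : ℝ) :
    ∀ᶠ k : ℕ in atTop, B ^ (k + 1) ≤ k ! := by
  have h := (FloorSemiring.tendsto_pow_div_factorial_atTop B).const_mul B
  rw [mul_zero] at h
  filter_upwards [h.eventually_le_const zero_lt_one] with k hk
  rwa [← mul_div_assoc, ← pow_succ', div_le_one (by positivity)] at hk

theorem factorial_le_Gamma {k : ℕ} {y : ℝ} (hk : 1 ≤ k) (hy : k + 1 ≤ y) :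
    (k ! : ℝ) ≤ Gamma y := by
  have hk' : (2 : ℝ) ≤ k + 1 := by norm_cast; omega
  rw [← Gamma_nat_eq_factorial]
  exact Gamma_strictMonoOn_Ici.monotoneOn hk' (hk'.trans hy) hy

theorem eventually_pow_le_Gamma {α β b : ℝ} (hα : 0 < α) (hβ : 1 ≤ β) (hb : 1 ≤ b) :
    ∀ᶠ n : ℕ in atTop, b ^ n ≤ Gamma (α * n + β) := by
  set p := ⌈α⁻¹⌉₊
  have hfloor : Tendsto (fun n : ℕ => ⌊α * n⌋₊) atTop atTop :=
    tendsto_nat_floor_atTop.comp (tendsto_natCast_atTop_atTop.const_mul_atTop hα)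
  filter_upwards [hfloor.eventually (eventually_pow_succ_le_factorial (b ^ p)),
    hfloor.eventually_ge_atTop 1] with n hfact hk
  set k := ⌊α * n⌋₊
  have hn : n ≤ (k + 1) * p := by
    have hlt : (n : ℝ) < (k + 1) * α⁻¹ := by
      rw [← div_eq_mul_inv, lt_div_iff₀ hα, mul_comm]
      exact Nat.lt_floor_add_one _
    have : (n : ℝ) < (k + 1) * p :=
      hlt.trans_le (mul_le_mul_of_nonneg_left (Nat.le_ceil _) (by positivity))
    exact_mod_cast this.le
  have hkα : (k : ℝ) ≤ α * n := Nat.floor_le (by positivity)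
  calc b ^ n ≤ b ^ ((k + 1) * p) := pow_le_pow_right₀ hb hn
    _ = (b ^ p) ^ (k + 1) := by rw [← pow_mul, mul_comm]
    _ ≤ k ! := hfact
    _ ≤ Gamma (α * n + β) := factorial_le_Gamma hk (by linarith)

theorem summable_pow_div_Gamma {α β : ℝ} (hα : 0 < α) (hβ : 1 ≤ β) (x : ℝ) :
    Summable fun n : ℕ => x ^ n / Gamma (α * n + β) := by
  have hb : 1 ≤ |x| + 1 := le_add_of_nonneg_left (abs_nonneg x)
  have hratio : |x| / (|x| + 1) < 1 := (div_lt_one (by positivity)).2 (lt_add_one _)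
  refine summable_of_isBigO_nat (summable_geometric_of_lt_one (by positivity) hratio)
    (Eventually.isBigO ?_)
  filter_upwards [eventually_pow_le_Gamma hα hβ hb] with n hn
  have hΓ : 0 < Gamma (α * n + β) := Gamma_pos_of_pos (by positivity)
  rw [norm_div, norm_pow, norm_eq_abs, norm_of_nonneg hΓ.le, div_pow]
  exact div_le_div_of_nonneg_left (by positivity) (by positivity) hn

theorem mittagLeffler_zero (α : ℝ) : mittagLeffler α 0 = 1 := by
  rw [mittagLeffler, tsum_eq_single 0 fun n hn => by simp [zero_pow hn]]
  simp

theorem hasSum_pow_succ_mul_rpow_div_Gamma {α r : ℝ} (hα : 0 < α) (z : ℝ) (hr : 0 ≤ r) :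
    HasSum (fun n : ℕ => z ^ (n + 1) * (r ^ (α * n) / Gamma (α * n + 1)))
      (z * mittagLeffler α (z * r ^ α)) := by
  refine ((summable_pow_div_Gamma hα le_rfl (z * r ^ α)).hasSum.mul_left z).congr_fun
    fun n => ?_
  rw [rpow_mul_natCast hr, mul_pow, pow_succ']
  ring

theorem hasSum_mittagLeffler_mul_rpow_sub_one {α τ : ℝ} (hα : 0 < α) (z : ℝ) (hτ : 0 ≤ τ) :
    HasSum (fun n : ℕ => z ^ (n + 1) * (τ ^ (α * (n + 1)) / Gamma (α * (n + 1) + 1)))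
      (mittagLeffler α (z * τ ^ α) - 1) := by
  have h : HasSum (fun n : ℕ => (z * τ ^ α) ^ (n + 1) / Gamma (α * (n + 1) + 1))
      (mittagLeffler α (z * τ ^ α) - 1) := by
    simpa [mittagLeffler] using
      (hasSum_nat_add_iff' 1).2 (summable_pow_div_Gamma hα le_rfl (z * τ ^ α)).hasSum
  refine h.congr_fun fun n => ?_
  rw [← Nat.cast_succ, rpow_mul_natCast hτ, mul_pow, mul_div_assoc]

theorem summable_pow_succ_mul_rpow_div_Gamma {α r : ℝ} (hα : 0 < α) (z : ℝ) (hr : 0 ≤ r) :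
    Summable fun n : ℕ => z ^ (n + 1) * (r ^ (α * n + 1) / Gamma (α * n + 2)) := by
  refine ((summable_pow_div_Gamma hα one_le_two (z * r ^ α)).mul_left (z * r)).congr
    fun n => ?_
  rw [rpow_add_one' hr (by positivity), rpow_mul_natCast hr, mul_pow, pow_succ]
  ring

theorem integral_rpow_mul_sub_rpow {a b r : ℝ} (ha : 0 < a) (hb : 0 < b) (hr : 0 < r) :
    ∫ τ in (0 : ℝ)..r, τ ^ (a - 1) * (r - τ) ^ (b - 1) =
      r ^ (a + b - 1) * (Gamma a * Gamma b / Gamma (a + b)) := by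
  have h := Complex.betaIntegral_scaled a b hr
  rw [Complex.betaIntegral_eq_Gamma_mul_div _ _ (by simpa) (by simpa)] at h
  apply Complex.ofReal_injective
  rw [← intervalIntegral.integral_ofReal]
  convert h using 1
  · refine intervalIntegral.integral_congr fun τ hτ => ?_
    rw [uIcc_of_le hr.le] at hτ
    simp only [Complex.ofReal_mul, Complex.ofReal_cpow hτ.1,
      Complex.ofReal_cpow (sub_nonneg.2 hτ.2)]
    push_cast
    rfl
  · rw [Complex.ofReal_mul, Complex.ofReal_cpow hr.le]
    push_cast
    rw [← Complex.ofReal_add, Complex.Gamma_ofReal, Complex.Gamma_ofReal, Complex.Gamma_ofReal]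

theorem integral_sub_rpow_mul_rpow_div_Gamma {α γ r : ℝ} (hα : α < 1) (hγ : -1 < γ)
    (hr : 0 < r) :
    ∫ τ in (0 : ℝ)..r, (r - τ) ^ (-α) / Gamma (1 - α) * (τ ^ γ / Gamma (γ + 1)) =
      r ^ (γ + 1 - α) / Gamma (γ + 2 - α) := by
  have hβ := integral_rpow_mul_sub_rpow (a := γ + 1) (b := 1 - α) (by linarith) (by linarith) hr
  simp only [add_sub_cancel_right, sub_sub_cancel_left] at hβ
  have hΓ₁ : Gamma (γ + 1) ≠ 0 := (Gamma_pos_of_pos (by linarith)).ne'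
  have hΓ₂ : Gamma (1 - α) ≠ 0 := (Gamma_pos_of_pos (by linarith)).ne'
  calc _ = (Gamma (1 - α) * Gamma (γ + 1))⁻¹ * ∫ τ in (0 : ℝ)..r, τ ^ γ * (r - τ) ^ (-α) := by
        rw [← intervalIntegral.integral_const_mul]
        congr 1 with τ
        field_simp
    _ = _ := by
      rw [hβ, show γ + 1 + (1 - α) - 1 = γ + 1 - α by ring,
        show γ + 1 + (1 - α) = γ + 2 - α by ring]
      field_simp

theorem integral_tsum_mul_of_nonneg {X : Type*} [MeasurableSpace X] {μ : Measure X}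
    {c : ℕ → ℝ} {f : ℕ → X → ℝ} (hf : ∀ n, 0 ≤ᵐ[μ] f n) (hint : ∀ n, Integrable (f n) μ)
    (hsum : Summable fun n => |c n| * ∫ x, f n x ∂μ) :
    ∫ x, ∑' n, c n * f n x ∂μ = ∑' n, c n * ∫ x, f n x ∂μ := by
  have hnorm : ∀ n, ∫ x, ‖c n * f n x‖ ∂μ = |c n| * ∫ x, f n x ∂μ := fun n => by
    rw [← integral_const_mul]
    refine integral_congr_ae ((hf n).mono fun x hx => ?_)
    simp only [Pi.zero_apply] at hx
    simp only [norm_mul, norm_eq_abs, abs_of_nonneg hx]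
  rw [← integral_tsum_of_summable_integral_norm (fun n => (hint n).const_mul (c n))
    (by simpa only [hnorm] using hsum)]
  simp only [integral_const_mul]

theorem integral_sub_rpow_mul_mittagLeffler_sub_one {α z r : ℝ} (hα0 : 0 < α) (hα1 : α < 1)
    (hr : 0 < r) :
    ∫ τ in (0 : ℝ)..r, (r - τ) ^ (-α) / Gamma (1 - α) * (mittagLeffler α (z * τ ^ α) - 1) =
      ∑' n : ℕ, z ^ (n + 1) * (r ^ (α * n + 1) / Gamma (α * n + 2)) := by
  set f : ℕ → ℝ → ℝ := fun n τ =>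
    (r - τ) ^ (-α) / Gamma (1 - α) * (τ ^ (α * (n + 1)) / Gamma (α * (n + 1) + 1))
  have hf : ∀ n, ∫ τ in (0 : ℝ)..r, f n τ = r ^ (α * n + 1) / Gamma (α * n + 2) := fun n => by
    rw [integral_sub_rpow_mul_rpow_div_Gamma hα1 (by nlinarith) hr]
    ring_nf
  -- each `f n` has a nonzero integral, hence is integrable
  have hint : ∀ n, IntegrableOn (f n) (Ioc 0 r) := fun n =>
    (intervalIntegrable_iff_integrableOn_Ioc_of_le hr.le).1 <|
      intervalIntegral.intervalIntegrable_of_integral_ne_zero (by rw [hf]; positivity)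
  have hf_nonneg : ∀ n, 0 ≤ᵐ[volume.restrict (Ioc 0 r)] f n := fun n => by
    filter_upwards [ae_restrict_mem measurableSet_Ioc] with τ hτ
    have := sub_nonneg.2 hτ.2
    have := hτ.1.le
    positivity
  simp only [intervalIntegral.integral_of_le hr.le] at hf ⊢
  calc _ = ∫ τ in Ioc 0 r, ∑' n, z ^ (n + 1) * f n τ := by
        refine setIntegral_congr_fun measurableSet_Ioc fun τ hτ => ?_
        rw [← (hasSum_mittagLeffler_mul_rpow_sub_one hα0 z hτ.1.le).tsum_eq, ← tsum_mul_left]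
        simp only [f]
        ring_nf
    _ = _ := by
      rw [integral_tsum_mul_of_nonneg hf_nonneg hint]
      · simp only [hf]
      · simpa only [hf, abs_pow] using summable_pow_succ_mul_rpow_div_Gamma hα0 |z| hr.le

theorem hasDerivAt_rpow_add_one_div_Gamma {s : ℝ} (hs : 0 ≤ s) (r : ℝ) :
    HasDerivAt (fun r => r ^ (s + 1) / Gamma (s + 2)) (r ^ s / Gamma (s + 1)) r := by
  have hΓ : Gamma (s + 2) = (s + 1) * Gamma (s + 1) := by
    rw [← Gamma_add_one (by positivity)]
    ring_nf
  refine ((hasDerivAt_rpow_const (Or.inr (by linarith : 1 ≤ s + 1))).div_const _).congr_deriv ?_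
  rw [hΓ, add_sub_cancel_right]
  field_simp [(Gamma_pos_of_pos (by positivity : 0 < s + 1)).ne']

theorem hasDerivAt_tsum_pow_succ_mul_rpow_div_Gamma {α z t : ℝ} (hα : 0 < α) (ht : 0 < t) :
    HasDerivAt (fun r => ∑' n : ℕ, z ^ (n + 1) * (r ^ (α * n + 1) / Gamma (α * n + 2)))
      (z * mittagLeffler α (z * t ^ α)) t := by
  have ht' : t ∈ Ioo 0 (t + 1) := ⟨ht, lt_add_one t⟩
  rw [← (hasSum_pow_succ_mul_rpow_div_Gamma hα z ht.le).tsum_eq]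
  refine hasDerivAt_tsum_of_isPreconnected
    (hasSum_pow_succ_mul_rpow_div_Gamma hα |z| (by linarith : 0 ≤ t + 1)).summable isOpen_Ioo
    isPreconnected_Ioo
    (fun n r _ => (hasDerivAt_rpow_add_one_div_Gamma (by positivity) r).const_mul _)
    (fun n r hr => ?_) ht' (summable_pow_succ_mul_rpow_div_Gamma hα z ht.le) ht'
  have hΓ : 0 < Gamma (α * n + 1) := Gamma_pos_of_pos (by positivity)
  rw [norm_mul, norm_div, norm_pow, norm_eq_abs, norm_of_nonneg (rpow_nonneg hr.1.le _),
    norm_of_nonneg hΓ.le]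
  gcongr
  exacts [hr.1.le, hr.2.le]

/-- The Caputo fractional derivative of `τ ↦ E_{α,1}(z τ^α)` equals `z E_{α,1}(z t^α)`. -/
theorem caputo_deriv_mittagLeffler (α z t : ℝ) (hα0 : 0 < α) (hα1 : α < 1) (ht : 0 < t) :
    HasDerivAt
      (fun r : ℝ => ∫ τ in (0 : ℝ)..r,
        ((r - τ) ^ (-α) / Real.Gamma (1 - α)) *
          (mittagLeffler α (z * τ ^ α) - mittagLeffler α (z * (0 : ℝ) ^ α)))
      (z * mittagLeffler α (z * t ^ α)) t := by
  refine (hasDerivAt_tsum_pow_succ_mul_rpow_div_Gamma hα0 ht).congr_of_eventuallyEq ?_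
  filter_upwards [Ioi_mem_nhds ht] with r hr
  rw [zero_rpow hα0.ne', mul_zero, mittagLeffler_zero]
  exact integral_sub_rpow_mul_mittagLeffler_sub_one hα0 hα1 hr
end

section
/- Let 0 < α ≤ 1, T > 0, a ≥ 0, K ≥ 0, and let Ψ : [0,T] → ℝ be continuous and nonnegative. Assume that Ψ(t) ≤ a + K ∫_0^t (t−τ)^{α−1} Ψ(τ) dτ for all t ∈ [0,T]. Then Ψ(t) ≤ a E_{α,1}(K Γ(α) t^α) = a Σ_{n=0}^∞ (K Γ(α) t^α)^n / Γ(αn+1) for all t ∈ [0,T]. -/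
/-!
Write `g_k(t) = (K Γ(α) t^α)^k / Γ(αk + 1)` for the terms of the Mittag-Leffler series. By the beta
integral, `K ∫_0^t (t-τ)^{α-1} g_k(τ) dτ = g_{k+1}(t)`. Starting from a bound `Ψ ≤ C` on the
compact interval and substituting the inequality into itself `n` times gives
`Ψ ≤ a (g_0 + ⋯ + g_{n-1}) + C g_n` on `[0,T]`. Since `Γ(αn + 1)` outgrows every geometric
sequence, the series converges and `g_n(t) → 0`, so letting `n → ∞` gives the bound.
-/

open MeasureTheory Filter Set Topology

theorem integral_rpow_mul_sub_rpow_s18 {p q t : ℝ} (hp : 0 < p) (hq : 0 < q) (ht : 0 < t) :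
    ∫ x in (0 : ℝ)..t, x ^ (p - 1) * (t - x) ^ (q - 1) =
      Real.Gamma p * Real.Gamma q / Real.Gamma (p + q) * t ^ (p + q - 1) := by
  have hB : Complex.betaIntegral p q =
      ((Real.Gamma p * Real.Gamma q / Real.Gamma (p + q) : ℝ) : ℂ) := by
    have h := Complex.Gamma_mul_Gamma_eq_betaIntegral (s := p) (t := q)
      (by simpa using hp) (by simpa using hq)
    rw [← Complex.ofReal_add, Complex.Gamma_ofReal, Complex.Gamma_ofReal,
      Complex.Gamma_ofReal] at h
    have hne : ((Real.Gamma (p + q) : ℝ) : ℂ) ≠ 0 := by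
      exact_mod_cast (Real.Gamma_pos_of_pos (add_pos hp hq)).ne'
    rw [Complex.ofReal_div, Complex.ofReal_mul, eq_div_iff hne]
    linear_combination -h
  have hscaled := Complex.betaIntegral_scaled p q ht
  have hofReal : ∫ x in (0 : ℝ)..t, (x : ℂ) ^ ((p : ℂ) - 1) * ((t : ℂ) - x) ^ ((q : ℂ) - 1) =
      ((∫ x in (0 : ℝ)..t, x ^ (p - 1) * (t - x) ^ (q - 1) : ℝ) : ℂ) := by
    rw [← intervalIntegral.integral_ofReal]
    refine intervalIntegral.integral_congr fun x hx => ?_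
    rw [uIcc_of_le ht.le] at hx
    push_cast
    rw [Complex.ofReal_cpow hx.1, Complex.ofReal_cpow (sub_nonneg.2 hx.2)]
    push_cast
    ring_nf
  rw [hofReal, hB, ← Complex.ofReal_one, ← Complex.ofReal_add, ← Complex.ofReal_sub,
    ← Complex.ofReal_cpow ht.le] at hscaled
  rw [mul_comm]
  exact_mod_cast hscaled

theorem factorial_div_le_Gamma_mul_add_one {α : ℝ} (hα : 0 < α) {j n : ℕ} (hj : α⁻¹ ≤ j)
    (hjn : j ≤ n) : ((n / j).factorial : ℝ) ≤ Real.Gamma (α * n + 1) := by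
  have hj0 : (0 : ℝ) < j := (inv_pos.2 hα).trans_le hj
  have hm : 1 ≤ n / j := (Nat.one_le_div_iff (by exact_mod_cast hj0)).2 hjn
  have hmα : ((n / j : ℕ) : ℝ) ≤ α * n :=
    calc ((n / j : ℕ) : ℝ) ≤ n / j := Nat.cast_div_le
      _ ≤ α * n := by
        have hjα : 1 ≤ j * α := (inv_le_iff_one_le_mul₀ hα).1 hj
        rw [div_le_iff₀ hj0]
        nlinarith [Nat.cast_nonneg (α := ℝ) n]
  rw [← Real.Gamma_nat_eq_factorial]
  have h2 : (2 : ℝ) ≤ (n / j : ℕ) + 1 := by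
    have : (1 : ℝ) ≤ (n / j : ℕ) := by exact_mod_cast hm
    linarith
  exact Real.Gamma_strictMonoOn_Ici.monotoneOn h2 (h2.trans (by linarith)) (by linarith)

theorem tendsto_pow_div_Gamma_mul_add_one {α : ℝ} (hα : 0 < α) (x : ℝ) :
    Tendsto (fun n : ℕ => x ^ n / Real.Gamma (α * n + 1)) atTop (𝓝 0) := by
  obtain ⟨j, hj⟩ := exists_nat_ge α⁻¹
  have hj0 : j ≠ 0 := by
    rintro rfl
    exact (inv_pos.2 hα).not_ge (by simpa using hj)
  set z := max |x| 1
  have hz : 1 ≤ z := le_max_right _ _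
  have hbound : ∀ᶠ n : ℕ in atTop, ‖x ^ n / Real.Gamma (α * n + 1)‖ ≤
      z ^ j * ((z ^ j) ^ (n / j) / (n / j).factorial) := by
    filter_upwards [eventually_ge_atTop j] with n hn
    have hfac : (0 : ℝ) < (n / j).factorial := by exact_mod_cast Nat.factorial_pos _
    have hpow : |x| ^ n ≤ z ^ j * (z ^ j) ^ (n / j) := by
      rw [← pow_mul, ← pow_add]
      calc |x| ^ n ≤ z ^ n := pow_le_pow_left₀ (abs_nonneg x) (le_max_left _ _) n
        _ ≤ z ^ (j + j * (n / j)) := by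
          refine pow_le_pow_right₀ hz ?_
          have := Nat.lt_mul_div_succ n (Nat.pos_of_ne_zero hj0)
          rw [Nat.mul_succ] at this
          omega
    rw [norm_div, norm_pow, Real.norm_eq_abs, Real.norm_of_nonneg
      (Real.Gamma_pos_of_pos (by positivity)).le, ← mul_div_assoc]
    exact div_le_div₀ (by positivity) hpow hfac (factorial_div_le_Gamma_mul_add_one hα hj hn)
  have hlim : Tendsto (fun n : ℕ => z ^ j * ((z ^ j) ^ (n / j) / (n / j).factorial)) atTop
      (𝓝 0) := by
    simpa using ((FloorSemiring.tendsto_pow_div_factorial_atTop (z ^ j)).comp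
      (Nat.tendsto_div_const_atTop hj0)).const_mul (z ^ j)
  exact squeeze_zero_norm' hbound hlim

theorem summable_pow_div_Gamma_mul_add_one {α : ℝ} (hα : 0 < α) (x : ℝ) :
    Summable (fun n : ℕ => x ^ n / Real.Gamma (α * n + 1)) := by
  refine summable_of_isBigO_nat summable_geometric_two ?_
  have h := (Asymptotics.isBigO_refl (fun n : ℕ => ((1 : ℝ) / 2) ^ n) atTop).mul
    ((tendsto_pow_div_Gamma_mul_add_one hα (2 * x)).isBigO_one ℝ)
  refine (h.congr_left fun n => ?_).congr_right fun n => mul_one _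
  rw [mul_pow, ← mul_div_assoc, ← mul_assoc, ← mul_pow]
  norm_num

noncomputable def mittagLefflerTerm (α c : ℝ) (k : ℕ) (t : ℝ) : ℝ :=
  (c * t ^ α) ^ k / Real.Gamma (α * k + 1)

theorem mittagLefflerTerm_zero (α c t : ℝ) : mittagLefflerTerm α c 0 t = 1 := by
  simp [mittagLefflerTerm]

theorem continuous_mittagLefflerTerm {α : ℝ} (hα : 0 ≤ α) (c : ℝ) (k : ℕ) :
    Continuous (mittagLefflerTerm α c k) :=
  ((continuous_const.mul (Real.continuous_rpow_const hα)).pow k).div_const _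

theorem intervalIntegrable_sub_rpow_mul {α t : ℝ} {f : ℝ → ℝ} (hα : 0 < α) (ht : 0 ≤ t)
    (hf : ContinuousOn f (Icc 0 t)) :
    IntervalIntegrable (fun τ => (t - τ) ^ (α - 1) * f τ) volume 0 t := by
  have hker : IntervalIntegrable (fun τ : ℝ => (t - τ) ^ (α - 1)) volume 0 t := by
    simpa using ((intervalIntegral.intervalIntegrable_rpow' (r := α - 1) (a := 0) (b := t)
      (by linarith)).comp_sub_left t).symm
  exact hker.mul_continuousOn (by rwa [uIcc_of_le ht])

theorem integral_sub_rpow_mul_mono {α t : ℝ} {f g : ℝ → ℝ} (hα : 0 < α) (ht : 0 ≤ t)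
    (hf : ContinuousOn f (Icc 0 t)) (hg : ContinuousOn g (Icc 0 t))
    (hfg : ∀ τ ∈ Icc 0 t, f τ ≤ g τ) :
    ∫ τ in (0 : ℝ)..t, (t - τ) ^ (α - 1) * f τ ≤ ∫ τ in (0 : ℝ)..t, (t - τ) ^ (α - 1) * g τ :=
  intervalIntegral.integral_mono_on ht (intervalIntegrable_sub_rpow_mul hα ht hf)
    (intervalIntegrable_sub_rpow_mul hα ht hg) fun τ hτ =>
      mul_le_mul_of_nonneg_left (hfg τ hτ) (Real.rpow_nonneg (sub_nonneg.2 hτ.2) _)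

theorem mul_integral_sub_rpow_mul_mittagLefflerTerm {α t : ℝ} (hα : 0 < α) (ht : 0 ≤ t)
    (K : ℝ) (k : ℕ) :
    K * ∫ τ in (0 : ℝ)..t, (t - τ) ^ (α - 1) * mittagLefflerTerm α (K * Real.Gamma α) k τ =
      mittagLefflerTerm α (K * Real.Gamma α) (k + 1) t := by
  rcases ht.eq_or_lt with rfl | ht
  · simp [mittagLefflerTerm, Real.zero_rpow hα.ne']
  set c := K * Real.Gamma α
  have hpow : ∀ τ ∈ uIcc 0 t, (t - τ) ^ (α - 1) * mittagLefflerTerm α c k τ =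
      c ^ k / Real.Gamma (α * k + 1) * (τ ^ ((α * k + 1) - 1) * (t - τ) ^ (α - 1)) := by
    intro τ hτ
    rw [uIcc_of_le ht.le] at hτ
    rw [mittagLefflerTerm, add_sub_cancel_right, mul_pow, ← Real.rpow_natCast (τ ^ α),
      ← Real.rpow_mul hτ.1, mul_comm α]
    ring
  have hk : 0 < Real.Gamma (α * k + 1) := Real.Gamma_pos_of_pos (by positivity)
  have hk1 : 0 < Real.Gamma (α * (k + 1 : ℕ) + 1) := Real.Gamma_pos_of_pos (by positivity)
  rw [intervalIntegral.integral_congr hpow, intervalIntegral.integral_const_mul,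
    integral_rpow_mul_sub_rpow_s18 (by positivity) hα ht, mittagLefflerTerm,
    show α * k + 1 + α = α * (k + 1 : ℕ) + 1 by push_cast; ring,
    show α * (k + 1 : ℕ) + 1 - 1 = α * (k + 1 : ℕ) by ring, Real.rpow_mul ht.le,
    Real.rpow_natCast]
  field_simp
  ring

theorem mul_integral_sub_rpow_mul_sum_mittagLefflerTerm {α t : ℝ} (hα : 0 < α) (ht : 0 ≤ t)
    (K a C : ℝ) (n : ℕ) :
    K * ∫ τ in (0 : ℝ)..t, (t - τ) ^ (α - 1) *
        (a * ∑ k ∈ Finset.range n, mittagLefflerTerm α (K * Real.Gamma α) k τ +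
          C * mittagLefflerTerm α (K * Real.Gamma α) n τ) =
      a * ∑ k ∈ Finset.range n, mittagLefflerTerm α (K * Real.Gamma α) (k + 1) t +
        C * mittagLefflerTerm α (K * Real.Gamma α) (n + 1) t := by
  set g := mittagLefflerTerm α (K * Real.Gamma α)
  have hint : ∀ k, IntervalIntegrable (fun τ => (t - τ) ^ (α - 1) * g k τ) volume 0 t :=
    fun k => intervalIntegrable_sub_rpow_mul hα ht
      (continuous_mittagLefflerTerm hα.le _ k).continuousOn
  have hsplit : (fun τ => (t - τ) ^ (α - 1) * (a * ∑ k ∈ Finset.range n, g k τ + C * g n τ)) =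
      fun τ => a * ∑ k ∈ Finset.range n, (t - τ) ^ (α - 1) * g k τ +
        C * ((t - τ) ^ (α - 1) * g n τ) := by
    ext τ
    simp only [Finset.mul_sum, mul_add]
    ring_nf
  have hsum : IntervalIntegrable (fun τ => ∑ k ∈ Finset.range n, (t - τ) ^ (α - 1) * g k τ)
      volume 0 t := by
    simpa only [Finset.sum_fn] using IntervalIntegrable.sum (Finset.range n) fun k _ => hint k
  rw [hsplit, intervalIntegral.integral_add (hsum.const_mul a) ((hint n).const_mul C),
    intervalIntegral.integral_const_mul, intervalIntegral.integral_const_mul,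
    intervalIntegral.integral_finsetSum fun k _ => hint k, mul_add, mul_left_comm,
    Finset.mul_sum, mul_left_comm K C]
  simp only [g, mul_integral_sub_rpow_mul_mittagLefflerTerm hα ht]

theorem le_sum_mittagLefflerTerm_add_mul {α T a K C : ℝ} {Ψ : ℝ → ℝ} (hα : 0 < α) (hK : 0 ≤ K)
    (hΨc : ContinuousOn Ψ (Icc 0 T)) (hC : ∀ t ∈ Icc 0 T, Ψ t ≤ C)
    (hineq : ∀ t ∈ Icc 0 T, Ψ t ≤ a + K * ∫ τ in (0 : ℝ)..t, (t - τ) ^ (α - 1) * Ψ τ)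
    (n : ℕ) :
    ∀ t ∈ Icc 0 T, Ψ t ≤ a * ∑ k ∈ Finset.range n, mittagLefflerTerm α (K * Real.Gamma α) k t +
      C * mittagLefflerTerm α (K * Real.Gamma α) n t := by
  set g := mittagLefflerTerm α (K * Real.Gamma α)
  induction n with
  | zero => simpa [g, mittagLefflerTerm_zero] using hC
  | succ n ih =>
    intro t ht
    have hsub : Icc 0 t ⊆ Icc 0 T := Icc_subset_Icc_right ht.2
    have hcont : ContinuousOn (fun τ => a * ∑ k ∈ Finset.range n, g k τ + C * g n τ)
        (Icc 0 t) :=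
      (continuous_const.mul (continuous_finsetSum _ fun k _ =>
        continuous_mittagLefflerTerm hα.le _ k)).add
        (continuous_const.mul (continuous_mittagLefflerTerm hα.le _ n)) |>.continuousOn
    calc Ψ t ≤ a + K * ∫ τ in (0 : ℝ)..t, (t - τ) ^ (α - 1) * Ψ τ := hineq t ht
      _ ≤ a + K * ∫ τ in (0 : ℝ)..t, (t - τ) ^ (α - 1) *
            (a * ∑ k ∈ Finset.range n, g k τ + C * g n τ) := by
        gcongr
        exact integral_sub_rpow_mul_mono hα ht.1 (hΨc.mono hsub) hcont fun τ hτ =>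
          ih τ (hsub hτ)
      _ = a * ∑ k ∈ Finset.range (n + 1), g k t + C * g (n + 1) t := by
        rw [mul_integral_sub_rpow_mul_sum_mittagLefflerTerm hα ht.1, Finset.sum_range_succ']
        simp only [g, mittagLefflerTerm_zero]
        ring

theorem generalized_gronwall_general (α T a K : ℝ) (hα0 : 0 < α) (hK : 0 ≤ K) (Ψ : ℝ → ℝ)
    (hΨc : ContinuousOn Ψ (Set.Icc (0 : ℝ) T))
    (hineq : ∀ t ∈ Set.Icc (0 : ℝ) T,
      Ψ t ≤ a + K * ∫ τ in (0 : ℝ)..t, (t - τ) ^ (α - 1) * Ψ τ) :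
    ∀ t ∈ Set.Icc (0 : ℝ) T,
      Ψ t ≤ a * ∑' n : ℕ, (K * Real.Gamma α * t ^ α) ^ n / Real.Gamma (α * n + 1) := by
  obtain ⟨C, hC⟩ := isCompact_Icc.exists_bound_of_continuousOn hΨc
  intro t ht
  have hsum := summable_pow_div_Gamma_mul_add_one hα0 (K * Real.Gamma α * t ^ α)
  have hlim := (hsum.hasSum.tendsto_sum_nat.const_mul a).add
    (hsum.tendsto_atTop_zero.const_mul C)
  rw [mul_zero, add_zero] at hlim
  exact ge_of_tendsto' hlim fun n => le_sum_mittagLefflerTerm_add_mul hα0 hK hΨc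
    (fun s hs => (le_abs_self _).trans (hC s hs)) hineq n t ht

/-- The generalized (singular-kernel) Gronwall inequality: if
`Ψ(t) ≤ a + K ∫_0^t (t-τ)^{α-1} Ψ(τ) dτ` on `[0,T]`, then
`Ψ(t) ≤ a E_{α,1}(K Γ(α) t^α) = a Σ_{n=0}^∞ (K Γ(α) t^α)^n / Γ(αn+1)`. -/
theorem generalized_gronwall (α T a K : ℝ) (hα0 : 0 < α) (hα1 : α ≤ 1) (hT : 0 < T)
    (ha : 0 ≤ a) (hK : 0 ≤ K) (Ψ : ℝ → ℝ)
    (hΨc : ContinuousOn Ψ (Set.Icc (0 : ℝ) T))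
    (hΨ0 : ∀ t ∈ Set.Icc (0 : ℝ) T, 0 ≤ Ψ t)
    (hineq : ∀ t ∈ Set.Icc (0 : ℝ) T,
      Ψ t ≤ a + K * ∫ τ in (0 : ℝ)..t, (t - τ) ^ (α - 1) * Ψ τ) :
    ∀ t ∈ Set.Icc (0 : ℝ) T,
      Ψ t ≤ a * ∑' n : ℕ, (K * Real.Gamma α * t ^ α) ^ n / Real.Gamma (α * n + 1) :=
  generalized_gronwall_general α T a K hα0 hK Ψ hΨc hineq
end
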